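/- Let s(n) = Σ_{i=1}^{k} a_i r_i^n with r_i pairwise distinct and a_i nonzero, and fix offsets φ_0 < φ_1 < … < φ_{k-1} in ℕ such that the k×k matrix Φ with Φ[p,i] = r_i^{φ_p} is invertible. For l ∈ {0,…,k} let B_l be the k×k matrix whose columns are the vectors (s(φ_0 + m), s(φ_1 + m), …, s(φ_{k-1} + m))ᵀ for m ∈ {0,…,k} \ {k−l}. Then det(B_l)/det(B_0) = e_l(r_1,…,r_k), independently of the choice of offsets φ. -/

import Mathlib

/-!
Write `B_l = Φ · diag(a) · W_l`, where `W_l` is the Vandermonde matrix of `r` with the exponent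
`k - l` skipped; `Φ` and `a` cancel in the quotient, and `W_0` is the Vandermonde matrix `V`.
Expanding the Vandermonde determinant of `(-X, r_1, …, r_k)` along its first row shows that
`det W_l` is `det V` times the coefficient of `X^(k-l)` in `∏ (X + r_i)`, which is `e_l(r)`.
-/

open Finset Polynomial Matrix

theorem Fin.val_succAbove_eq_ite {n : ℕ} (m : Fin (n + 1)) (q : Fin n) :
    (m.succAbove q : ℕ) = if (q : ℕ) < m then (q : ℕ) else (q : ℕ) + 1 := by
  simp only [Fin.succAbove, Fin.lt_def, Fin.val_castSucc]
  split_ifs <;> simp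

variable {R : Type*} [CommRing R]

theorem det_vandermonde_cons_neg_X {k : ℕ} (r : Fin k → R) :
    (vandermonde (Fin.cons (-X) (C ∘ r) : Fin (k + 1) → R[X])).det =
      (∏ i, (X + C (r i))) * C (vandermonde r).det := by
  rw [det_vandermonde, det_vandermonde, Fin.prod_univ_succ, Fin.prod_Ioi_zero]
  simp [map_prod, add_comm]

-- Putting `-X` rather than `X` first makes `(-X)^m` absorb the cofactor sign `(-1)^m`.
theorem det_vandermonde_cons_neg_X_eq_sum {k : ℕ} (r : Fin k → R) :
    (vandermonde (Fin.cons (-X) (C ∘ r) : Fin (k + 1) → R[X])).det =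
      ∑ m : Fin (k + 1), C (of fun i q => r i ^ (m.succAbove q : ℕ)).det * X ^ (m : ℕ) := by
  rw [det_succ_row_zero]
  refine sum_congr rfl fun m _ => ?_
  have hminor : (vandermonde (Fin.cons (-X) (C ∘ r) : Fin (k + 1) → R[X])).submatrix
      Fin.succ m.succAbove = (of fun i q => r i ^ (m.succAbove q : ℕ)).map C := by
    ext i q : 1
    simp only [submatrix_apply, vandermonde_apply, Fin.cons_succ, Function.comp_apply,
      map_apply, of_apply, map_pow]
  rw [hminor, ← RingHom.mapMatrix_apply, ← RingHom.map_det, vandermonde_apply, Fin.cons_zero,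
    ← mul_pow, neg_one_mul, neg_neg, mul_comm]

theorem det_of_pow_succAbove {k : ℕ} (r : Fin k → R) (m : Fin (k + 1)) :
    (of fun i q => r i ^ (m.succAbove q : ℕ)).det =
      (∑ t ∈ powersetCard (k - m) univ, ∏ i ∈ t, r i) * (vandermonde r).det := by
  have h := congrArg (coeff · m)
    ((det_vandermonde_cons_neg_X_eq_sum r).symm.trans (det_vandermonde_cons_neg_X r))
  simp only [finsetSum_coeff, coeff_C_mul_X_pow, coeff_mul_C, Fin.val_inj, sum_ite_eq,
    mem_univ, if_true] at h
  rw [h, prod_X_add_C_coeff univ r (by simp [m.is_le]), card_univ, Fintype.card_fin]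

theorem det_of_sum_mul_pow_add {ι : Type*} [Fintype ι] [DecidableEq ι] (a r : ι → R)
    (φ e : ι → ℕ) :
    (of fun p q => ∑ i, a i * r i ^ (φ p + e q)).det =
      (of fun p i => r i ^ φ p).det * (∏ i, a i) * (of fun i q => r i ^ e q).det := by
  have hfactor : (of fun p q => ∑ i, a i * r i ^ (φ p + e q)) =
      of (fun p i => r i ^ φ p) * of fun i q => a i * r i ^ e q := by
    ext p q
    simp only [of_apply, mul_apply, pow_add]
    exact sum_congr rfl fun i _ => by ring
  rw [hfactor, det_mul, mul_assoc, ← det_mul_column]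
  rfl

theorem gsd_volume_quotients_general_general (k : ℕ) (a r : Fin k → ℂ)
    (hr : Function.Injective r) (ha : ∀ i, a i ≠ 0)
    (s : ℕ → ℂ) (hs : ∀ n, s n = ∑ i : Fin k, a i * r i ^ n)
    (φ : Fin k → ℕ) (hΦ : IsUnit (Matrix.of fun (p : Fin k) (i : Fin k) => r i ^ φ p))
    (B : ℕ → Matrix (Fin k) (Fin k) ℂ)
    (hB : ∀ l, B l = Matrix.of fun (p : Fin k) (q : Fin k) =>
      s (φ p + (if (q : ℕ) < k - l then (q : ℕ) else (q : ℕ) + 1)))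
    (l : ℕ) (hl : l ≤ k) :
    (B l).det / (B 0).det =
      ∑ t ∈ Finset.powersetCard l (Finset.univ : Finset (Fin k)), ∏ i ∈ t, r i := by
  have hdet : ∀ l ≤ k, (B l).det = (of fun p i => r i ^ φ p).det * (∏ i, a i) *
      ((∑ t ∈ powersetCard l univ, ∏ i ∈ t, r i) * (vandermonde r).det) := by
    intro l hl
    have hskip := det_of_pow_succAbove r ⟨k - l, by omega⟩
    rw [Nat.sub_sub_self hl] at hskip
    rw [← hskip, ← det_of_sum_mul_pow_add, hB]
    congr
    ext p q
    simp [hs, Fin.val_succAbove_eq_ite]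
  have hc : (of fun p i => r i ^ φ p).det * ∏ i, a i ≠ 0 :=
    mul_ne_zero (hΦ.map detMonoidHom).ne_zero (prod_ne_zero_iff.2 fun i _ => ha i)
  have hV : (vandermonde r).det ≠ 0 := det_vandermonde_ne_zero_iff.2 hr
  rw [hdet l hl, hdet 0 k.zero_le, powersetCard_zero, sum_singleton, prod_empty, one_mul,
    mul_div_mul_left _ _ hc, mul_div_cancel_right₀ _ hV]

/-- Theorem 2 (general, non-consecutive sampling): for any strictly increasing
offsets `φ` with invertible `Φ`, the determinant quotients of the combinatorial
matrices equal the elementary symmetric polynomials of the common ratios. -/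
theorem gsd_volume_quotients_general (k : ℕ) (a r : Fin k → ℂ)
    (hr : Function.Injective r) (ha : ∀ i, a i ≠ 0)
    (s : ℕ → ℂ) (hs : ∀ n, s n = ∑ i : Fin k, a i * r i ^ n)
    (φ : Fin k → ℕ) (hφ : StrictMono φ)
    (hΦ : IsUnit (Matrix.of fun (p : Fin k) (i : Fin k) => r i ^ φ p))
    (B : ℕ → Matrix (Fin k) (Fin k) ℂ)
    (hB : ∀ l, B l = Matrix.of fun (p : Fin k) (q : Fin k) =>
      s (φ p + (if (q : ℕ) < k - l then (q : ℕ) else (q : ℕ) + 1)))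
    (l : ℕ) (hl : l ≤ k) :
    (B l).det / (B 0).det =
      ∑ t ∈ Finset.powersetCard l (Finset.univ : Finset (Fin k)), ∏ i ∈ t, r i :=
  gsd_volume_quotients_general_general k a r hr ha s hs φ hΦ B hB l hl
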